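/- The inclusion chain decide[CFTR] ⊆ decide[CFpoly] ⊆ decide[CF] holds: every terminating CFTR program is a CFpoly program, so every set decided by a CFTR program is decided by a CFpoly program, and every set decided by a CFpoly program is decided by a CF program. -/

import Mathlib

/-! # Cons-free programs (CF / CFTR / CFpoly / NCF) and Turing-machine complexity classes -/

/-- Values: booleans and bit strings. -/
inductive Val : Type
  | bool : Bool → Val
  | str  : List Bool → Val
deriving DecidableEq, Inhabited

/-- Base operations of cons-free programs. -/
inductive BOp : Type
  | not | null | head | tail
deriving DecidableEq, Inhabited

/-- Expressions.  `amb` is the nondeterministic choice construct of NCF;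
CF programs are exactly the choice-free programs. -/
inductive Exp : Type
  | tt   : Exp
  | ff   : Exp
  | nil  : Exp
  | var  : Nat → Exp
  | base : BOp → Exp → Exp
  | ite  : Exp → Exp → Exp → Exp
  | call : Nat → List Exp → Exp
  | amb  : Exp → Exp → Exp
deriving Inhabited

/-- A function definition `f x1 ... xm = e`: arity `m` and body `e`
(variables are de Bruijn-style indices into the argument list). -/
structure Defn where
  arity : Nat
  body  : Exp
deriving Inhabited

/-- A program is a finite list of function definitions; the first one is the entry point. -/
abbrev Prog := List Defn

/-- Body of the entry (first) function. -/
def Prog.entry (p : Prog) : Exp := p.headI.body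

/-- Semantics of the base functions (partial). -/
def evalBase : BOp → Val → Option Val
  | .not,  .bool b       => some (.bool (!b))
  | .null, .str s        => some (.bool s.isEmpty)
  | .head, .str (b :: _) => some (.bool b)
  | .tail, .str (_ :: s) => some (.str s)
  | _,     _             => none

/- Call-by-value big-step semantics.  `EvalH p ρ e v n h` means: in environment `ρ`
the expression `e` evaluates to `v`, by a computation (proof) tree with `n` nodes
whose call history (the sequence of configurations `(f, arguments)` of calls to
program-defined functions, in evaluation order) is `h`. -/
mutual
inductive EvalH (p : Prog) : List Val → Exp → Val → Nat → List (Nat × List Val) → Prop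
  | tt  {ρ} : EvalH p ρ .tt (.bool true) 1 []
  | ff  {ρ} : EvalH p ρ .ff (.bool false) 1 []
  | nil {ρ} : EvalH p ρ .nil (.str []) 1 []
  | var {ρ : List Val} {i : Nat} {v} : ρ[i]? = some v → EvalH p ρ (.var i) v 1 []
  | base {ρ op e v w n h} :
      EvalH p ρ e v n h → evalBase op v = some w →
      EvalH p ρ (.base op e) w (n + 1) h
  | iteT {ρ e0 e1 e2 v n0 n1 h0 h1} :
      EvalH p ρ e0 (.bool true) n0 h0 → EvalH p ρ e1 v n1 h1 →
      EvalH p ρ (.ite e0 e1 e2) v (n0 + n1 + 1) (h0 ++ h1)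
  | iteF {ρ e0 e1 e2 v n0 n2 h0 h2} :
      EvalH p ρ e0 (.bool false) n0 h0 → EvalH p ρ e2 v n2 h2 →
      EvalH p ρ (.ite e0 e1 e2) v (n0 + n2 + 1) (h0 ++ h2)
  | ambL {ρ e1 e2 v n h} :
      EvalH p ρ e1 v n h → EvalH p ρ (.amb e1 e2) v (n + 1) h
  | ambR {ρ e1 e2 v n h} :
      EvalH p ρ e2 v n h → EvalH p ρ (.amb e1 e2) v (n + 1) h
  | call {ρ : List Val} {f : Nat} {es ws d v m n hs h} :
      p[f]? = some d → EvalArgsH p ρ es ws m hs → ws.length = d.arity →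
      EvalH p ws d.body v n h →
      EvalH p ρ (.call f es) v (m + n + 1) (hs ++ (f, ws) :: h)

inductive EvalArgsH (p : Prog) : List Val → List Exp → List Val → Nat → List (Nat × List Val) → Prop
  | nil {ρ} : EvalArgsH p ρ [] [] 0 []
  | cons {ρ e es v vs n m h hs} :
      EvalH p ρ e v n h → EvalArgsH p ρ es vs m hs →
      EvalArgsH p ρ (e :: es) (v :: vs) (n + m) (h ++ hs)
end

/-- `p, ρ ⊢ e → v`. -/
def Eval (p : Prog) (ρ : List Val) (e : Exp) (v : Val) : Prop := ∃ n h, EvalH p ρ e v n h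

/-- Pointwise evaluation of a list of expressions. -/
def EvalList (p : Prog) (ρ : List Val) (es : List Exp) (ws : List Val) : Prop :=
  List.Forall₂ (Eval p ρ) es ws

/-- `⟦p⟧(x) = v` with computation-tree size `n` and call history `h`. -/
def RunH (p : Prog) (x : List Bool) (v : Val) (n : Nat) (h : List (Nat × List Val)) : Prop :=
  EvalH p [Val.str x] p.entry v n h

/-- `⟦p⟧(x) = v`. -/
def Run (p : Prog) (x : List Bool) (v : Val) : Prop := ∃ n h, RunH p x v n h

/-- `time_p(x) = n`: the computation tree `T^{p,x}` has `n` nodes. -/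
def TimeIs (p : Prog) (x : List Bool) (n : Nat) : Prop := ∃ v h, RunH p x v n h

/-- Deterministic decision: `p` terminates on every input, answering `True` exactly on `X`. -/
def Decides (p : Prog) (X : Set (List Bool)) : Prop :=
  ∀ x : List Bool, (x ∈ X ∧ Run p x (.bool true)) ∨ (x ∉ X ∧ Run p x (.bool false))

/-- Nondeterministic decision: `x ∈ X` iff some computation `⟦p⟧(x) ⇝ True` exists. -/
def NDecides (p : Prog) (X : Set (List Bool)) : Prop :=
  ∀ x : List Bool, x ∈ X ↔ Run p x (.bool true)

/-- `Reach_p(x)`: configurations `(f, ρ)` called at least once in some computation of `p` on `x`. -/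
def Reach (p : Prog) (x : List Bool) : Set (Nat × List Val) :=
  {c | ∃ v n h, RunH p x v n h ∧ c ∈ h}

/-- `V_x = {0,1} ∪ suffixes(x)`: the range of variation on input `x`. -/
def Vx (x : List Bool) : Set Val :=
  {v | (∃ b, v = .bool b) ∨ ∃ s, v = .str s ∧ s <:+ x}

/-- An expression is choice-free (belongs to the CF fragment). -/
inductive NoChoice : Exp → Prop
  | tt : NoChoice .tt
  | ff : NoChoice .ff
  | nil : NoChoice .nil
  | var (i) : NoChoice (.var i)
  | base (op) {e} : NoChoice e → NoChoice (.base op e)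
  | ite {a b c} : NoChoice a → NoChoice b → NoChoice c → NoChoice (.ite a b c)
  | call (f) {es} : (∀ e ∈ es, NoChoice e) → NoChoice (.call f es)

/-- A CF program: a cons-free program with no nondeterministic choice. -/
def CFProg (p : Prog) : Prop := ∀ d ∈ p, NoChoice d.body

/-- Does the expression contain a call to a program-defined function? -/
def hasCall : Exp → Bool
  | .base _ e => hasCall e
  | .ite a b c => hasCall a || hasCall b || hasCall c
  | .call _ _ => true
  | .amb a b => hasCall a || hasCall b
  | _ => false

/-- The classification map `α` with `X = 0 < T = 1 < N = 2`:
`α e = 0` if `e` has no calls; `α e = 1` if all calls in `e` are in tail position;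
`α e = 2` otherwise. -/
def alpha : Exp → Nat
  | .base _ e => if hasCall e then 2 else 0
  | .ite a b c => if hasCall a then 2 else max (alpha b) (alpha c)
  | .call _ es => if es.all (fun e => !hasCall e) then 1 else 2
  | .amb a b => max (alpha a) (alpha b)
  | _ => 0

/-- All calls in every definition body are in tail position (`α(e^f) ∈ {X, T}`). -/
def TRProg (p : Prog) : Prop := ∀ d ∈ p, alpha d.body ≤ 1

/-- A CFTR program: a tail-recursive cons-free program. -/
def CFTRProg (p : Prog) : Prop := CFProg p ∧ TRProg p

/-- Every call in the program is a tail call or a linear call, i.e. no call to a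
defined function is nested inside the argument of another call. -/
def linearOnly : Exp → Bool
  | .base _ e => linearOnly e
  | .ite a b c => linearOnly a && linearOnly b && linearOnly c
  | .call _ es => es.all (fun e => !hasCall e)
  | .amb a b => linearOnly a && linearOnly b
  | _ => true

/-- A CFpoly program: a CF program that terminates on all inputs, in polynomial native time. -/
def CFpolyProg (p : Prog) : Prop :=
  CFProg p ∧ (∀ x, ∃ v, Run p x v) ∧
    ∃ π : Polynomial ℕ, ∀ x n, TimeIs p x n → n ≤ π.eval x.length

/-- A judgment `p, ρ ⊢ e → v` occurs in the computation tree `T^{p,x}`. -/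
inductive Occurs (p : Prog) (x : List Bool) : List Val → Exp → Val → Prop
  | root {v} : Eval p [Val.str x] p.entry v → Occurs p x [Val.str x] p.entry v
  | base {ρ op e v w} : Occurs p x ρ (.base op e) v → Eval p ρ e w → Occurs p x ρ e w
  | iteTest {ρ a b c v w} : Occurs p x ρ (.ite a b c) v → Eval p ρ a w → Occurs p x ρ a w
  | iteT {ρ a b c v} : Occurs p x ρ (.ite a b c) v → Eval p ρ a (.bool true) →
      Eval p ρ b v → Occurs p x ρ b v
  | iteF {ρ a b c v} : Occurs p x ρ (.ite a b c) v → Eval p ρ a (.bool false) →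
      Eval p ρ c v → Occurs p x ρ c v
  | ambL {ρ a b v} : Occurs p x ρ (.amb a b) v → Eval p ρ a v → Occurs p x ρ a v
  | ambR {ρ a b v} : Occurs p x ρ (.amb a b) v → Eval p ρ b v → Occurs p x ρ b v
  | arg {ρ f es v e w} : Occurs p x ρ (.call f es) v → e ∈ es → Eval p ρ e w → Occurs p x ρ e w
  | body {ρ f es ws d v} : Occurs p x ρ (.call f es) v → p[f]? = some d →
      EvalList p ρ es ws → Eval p ws d.body v → Occurs p x ws d.body v

/- The deterministic left-to-right bottom-up evaluator, with fuel bounding call depth. -/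
mutual
def evalFuel (p : Prog) : Nat → List Val → Exp → Option Val
  | _, _, .tt => some (.bool true)
  | _, _, .ff => some (.bool false)
  | _, _, .nil => some (.str [])
  | _, ρ, .var i => ρ[i]?
  | k, ρ, .base op e => (evalFuel p k ρ e).bind (evalBase op)
  | k, ρ, .ite a b c =>
      match evalFuel p k ρ a with
      | some (.bool true) => evalFuel p k ρ b
      | some (.bool false) => evalFuel p k ρ c
      | _ => none
  | _, _, .amb _ _ => none
  | k, ρ, .call f es =>
      match evalArgsFuel p k ρ es with
      | some ws =>
          match k, p[f]? with
          | k' + 1, some d => if ws.length = d.arity then evalFuel p k' ws d.body else none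
          | _, _ => none
      | none => none
termination_by k _ e => (k, sizeOf e)
decreasing_by
  all_goals first
    | decreasing_tactic
    | (simp only [wfParam] at *; decreasing_tactic)
    | (apply Prod.Lex.left; simp [wfParam])
    | (simp_wf; simp [wfParam])

def evalArgsFuel (p : Prog) : Nat → List Val → List Exp → Option (List Val)
  | _, _, [] => some []
  | k, ρ, e :: es =>
      match evalFuel p k ρ e, evalArgsFuel p k ρ es with
      | some v, some vs => some (v :: vs)
      | _, _ => none
termination_by k _ es => (k, sizeOf es)
end

/-! ## Turing machines -/

/-- Head moves. -/
inductive Dir : Type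
  | L | S | R
deriving DecidableEq, Inhabited

def Dir.z : Dir → ℤ
  | .L => -1
  | .S => 0
  | .R => 1

/-- A configuration: control state, input-head position, work-head position, work tape. -/
structure Cfg (Q : Type) where
  q : Q
  ipos : ℤ
  wpos : ℤ
  tape : ℤ → Option Bool

/-- The symbol of the read-only input tape at position `i` (blank outside the input). -/
def inputSym (x : List Bool) (i : ℤ) : Option Bool :=
  if 0 ≤ i then x[i.toNat]? else none

/-- A deterministic Turing machine with a read-only input tape and a read-write work tape. -/
structure TM where
  Q : Type
  [fin : Fintype Q]
  [deq : DecidableEq Q]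
  δ : Q → Option Bool → Option Bool → Q × Option Bool × Dir × Dir
  start : Q
  accept : Q
  reject : Q

attribute [instance] TM.fin TM.deq

def TM.init (M : TM) : Cfg M.Q := ⟨M.start, 0, 0, fun _ => none⟩

/-- One deterministic step (the accepting and rejecting states are halting). -/
def TM.step (M : TM) (x : List Bool) (c : Cfg M.Q) : Cfg M.Q :=
  if c.q = M.accept ∨ c.q = M.reject then c
  else
    let r := M.δ c.q (inputSym x c.ipos) (c.tape c.wpos)
    ⟨r.1, c.ipos + r.2.2.1.z, c.wpos + r.2.2.2.z,
      fun j => if j = c.wpos then r.2.1 else c.tape j⟩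

/-- Configuration after `t` steps on input `x`. -/
def TM.conf (M : TM) (x : List Bool) (t : Nat) : Cfg M.Q := (M.step x)^[t] M.init

/-- `M` decides `X`: reaches `accept` on members, `reject` on non-members. -/
def TM.DecidesTM (M : TM) (X : Set (List Bool)) : Prop :=
  ∀ x : List Bool,
    (x ∈ X → ∃ t, (M.conf x t).q = M.accept) ∧ (x ∉ X → ∃ t, (M.conf x t).q = M.reject)

/-- The work head of `M` stays within `s` cells of the origin on input `x`. -/
def TM.SpaceBound (M : TM) (x : List Bool) (s : Nat) : Prop :=
  ∀ t, ((M.conf x t).wpos).natAbs ≤ s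

/-- `M` halts within `T` steps on input `x`. -/
def TM.HaltsIn (M : TM) (x : List Bool) (T : Nat) : Prop :=
  ∃ t ≤ T, (M.conf x t).q = M.accept ∨ (M.conf x t).q = M.reject

/-- LOGSPACE: decidable by a deterministic TM in `O(log n)` work space. -/
def LOGSPACE : Set (Set (List Bool)) :=
  {X | ∃ M : TM, M.DecidesTM X ∧
        ∃ C : Nat, ∀ x, M.SpaceBound x (C * (Nat.log 2 x.length + 1))}

/-- PTIME: decidable by a deterministic TM in time `O(n^k)` for some `k`. -/
def PTIME : Set (Set (List Bool)) :=
  {X | ∃ M : TM, M.DecidesTM X ∧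
        ∃ C k : Nat, ∀ x, M.HaltsIn x (C * (x.length + 1) ^ k)}

/-- A nondeterministic Turing machine (read-only input tape, read-write work tape). -/
structure NTM where
  Q : Type
  [fin : Fintype Q]
  δ : Q → Option Bool → Option Bool → Finset (Q × Option Bool × Dir × Dir)
  start : Q
  accept : Q

attribute [instance] NTM.fin

def NTM.init (M : NTM) : Cfg M.Q := ⟨M.start, 0, 0, fun _ => none⟩

/-- One nondeterministic step. -/
def NTM.Step (M : NTM) (x : List Bool) (c c' : Cfg M.Q) : Prop :=
  ∃ r ∈ M.δ c.q (inputSym x c.ipos) (c.tape c.wpos),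
    c' = ⟨r.1, c.ipos + r.2.2.1.z, c.wpos + r.2.2.2.z,
          fun j => if j = c.wpos then r.2.1 else c.tape j⟩

/-- A step staying within work space `s`. -/
def NTM.StepB (M : NTM) (x : List Bool) (s : Nat) (c c' : Cfg M.Q) : Prop :=
  M.Step x c c' ∧ c'.wpos.natAbs ≤ s

/-- Some computation path within work space `s` accepts `x`. -/
def NTM.AcceptsInSpace (M : NTM) (x : List Bool) (s : Nat) : Prop :=
  ∃ c : Cfg M.Q, Relation.ReflTransGen (M.StepB x s) M.init c ∧ c.q = M.accept

/-- Nondeterministic space classes `NSPACE(O(f))`. -/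
def NSPACEF (f : Nat → Nat) : Set (Set (List Bool)) :=
  {X | ∃ (M : NTM) (C : Nat), ∀ x, x ∈ X ↔ M.AcceptsInSpace x (C * (f x.length + 1))}

/-- NLOGSPACE = NSPACE(O(log n)). -/
def NLOGSPACE : Set (Set (List Bool)) := NSPACEF (Nat.log 2)

/-! ## Decision classes of the programming languages -/

def decideCFTR : Set (Set (List Bool)) := {X | ∃ p : Prog, CFTRProg p ∧ Decides p X}
def decideCF : Set (Set (List Bool)) := {X | ∃ p : Prog, CFProg p ∧ Decides p X}
def decideCFpoly : Set (Set (List Bool)) := {X | ∃ p : Prog, CFpolyProg p ∧ Decides p X}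
def decideNCF : Set (Set (List Bool)) := {X | ∃ p : Prog, NDecides p X}
def decideNCFTR : Set (Set (List Bool)) := {X | ∃ p : Prog, TRProg p ∧ NDecides p X}

/-!
In a CFTR program every call is a tail call, so each call `(f, ws)` in the call history returns
the final value, and the part of the history after it is exactly the history of the body of `f`
on `ws`. Choice-free evaluation is deterministic, so a configuration occurring twice would have a
history that is a proper suffix of itself: call histories are duplicate-free. All values stay in
`Vx x`, the booleans and the suffixes of `x`, so there are polynomially many configurations, and
the size of the computation tree is linear in the length of its call history.
-/

section

variable {p : Prog}

theorem EvalH.history_eq_nil {ρ e v n h} (H : EvalH p ρ e v n h) (he : hasCall e = false) :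
    h = [] := by
  match H with
  | .tt | .ff | .nil | .var _ => rfl
  | .base H' _ => exact H'.history_eq_nil (by simpa [hasCall] using he)
  | .iteT H0 H1 =>
    simp only [hasCall, Bool.or_eq_false_iff] at he
    rw [H0.history_eq_nil he.1.1, H1.history_eq_nil he.1.2]; rfl
  | .iteF H0 H2 =>
    simp only [hasCall, Bool.or_eq_false_iff] at he
    rw [H0.history_eq_nil he.1.1, H2.history_eq_nil he.2]; rfl
  | .ambL H' => exact H'.history_eq_nil (by simp_all [hasCall])
  | .ambR H' => exact H'.history_eq_nil (by simp_all [hasCall])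
  | .call .. => simp [hasCall] at he

theorem EvalArgsH.history_eq_nil {ρ es ws m hs} (H : EvalArgsH p ρ es ws m hs)
    (hes : ∀ e ∈ es, hasCall e = false) : hs = [] := by
  match H with
  | .nil => rfl
  | .cons He Hes =>
    rw [He.history_eq_nil (hes _ List.mem_cons_self),
      Hes.history_eq_nil fun e he => hes e (List.mem_cons_of_mem _ he)]
    rfl

mutual

theorem EvalH.deterministic (hp : CFProg p) {ρ e v n h} (he : NoChoice e)
    (H : EvalH p ρ e v n h) {v' n' h'} (H' : EvalH p ρ e v' n' h') : v = v' ∧ h = h' := by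
  match H with
  | .tt | .ff | .nil => cases H'; exact ⟨rfl, rfl⟩
  | .var hv =>
    cases H' with
    | var hv' => exact ⟨Option.some.inj (hv.symm.trans hv'), rfl⟩
  | .base H1 hb =>
    cases he with | base _ he =>
    cases H' with | base H1' hb' =>
    obtain ⟨rfl, rfl⟩ := H1.deterministic hp he H1'
    exact ⟨Option.some.inj (hb.symm.trans hb'), rfl⟩
  | .iteT H0 H1 =>
    cases he with | ite he0 he1 _ =>
    cases H' with
    | iteT H0' H1' =>
      obtain ⟨-, rfl⟩ := H0.deterministic hp he0 H0'
      obtain ⟨rfl, rfl⟩ := H1.deterministic hp he1 H1'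
      exact ⟨rfl, rfl⟩
    | iteF H0' _ => cases (H0.deterministic hp he0 H0').1
  | .iteF H0 H2 =>
    cases he with | ite he0 _ he2 =>
    cases H' with
    | iteT H0' _ => cases (H0.deterministic hp he0 H0').1
    | iteF H0' H2' =>
      obtain ⟨-, rfl⟩ := H0.deterministic hp he0 H0'
      obtain ⟨rfl, rfl⟩ := H2.deterministic hp he2 H2'
      exact ⟨rfl, rfl⟩
  | .ambL _ | .ambR _ => nomatch he
  | .call hd Hargs _ Hbody =>
    cases he with | call _ hes =>
    cases H' with | call hd' Hargs' _ Hbody' =>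
    obtain rfl := Option.some.inj (hd.symm.trans hd')
    obtain ⟨rfl, rfl⟩ := Hargs.deterministic hp hes Hargs'
    obtain ⟨rfl, rfl⟩ := Hbody.deterministic hp (hp _ (List.mem_of_getElem? hd)) Hbody'
    exact ⟨rfl, rfl⟩

theorem EvalArgsH.deterministic (hp : CFProg p) {ρ es ws m hs} (hes : ∀ e ∈ es, NoChoice e)
    (H : EvalArgsH p ρ es ws m hs) {ws' m' hs'} (H' : EvalArgsH p ρ es ws' m' hs') :
    ws = ws' ∧ hs = hs' := by
  match H with
  | .nil => cases H'; exact ⟨rfl, rfl⟩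
  | .cons He Hes =>
    cases H' with | cons He' Hes' =>
    obtain ⟨rfl, rfl⟩ := He.deterministic hp (hes _ List.mem_cons_self) He'
    obtain ⟨rfl, rfl⟩ :=
      Hes.deterministic hp (fun e he => hes e (List.mem_cons_of_mem _ he)) Hes'
    exact ⟨rfl, rfl⟩

end

@[simp] theorem bool_mem_Vx {x : List Bool} {b : Bool} : Val.bool b ∈ Vx x := Or.inl ⟨b, rfl⟩

@[simp] theorem str_mem_Vx {x s : List Bool} : Val.str s ∈ Vx x ↔ s <:+ x := by simp [Vx]

theorem evalBase_mem_Vx {x : List Bool} {op : BOp} {v w : Val} (hv : v ∈ Vx x)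
    (h : evalBase op v = some w) : w ∈ Vx x := by
  cases op <;> rcases v with _ | _ | ⟨b, s⟩ <;>
    simp only [evalBase, reduceCtorEq, Option.some.injEq] at h <;> subst h <;> simp
  exact (List.suffix_cons b s).trans (str_mem_Vx.1 hv)

mutual

theorem EvalH.mem_Vx {x : List Bool} {ρ e v n h} (H : EvalH p ρ e v n h)
    (hρ : ∀ u ∈ ρ, u ∈ Vx x) : v ∈ Vx x ∧ ∀ c ∈ h, ∀ u ∈ c.2, u ∈ Vx x := by
  match H with
  | .tt | .ff | .nil => simp
  | .var hv => simpa using hρ _ (List.mem_of_getElem? hv)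
  | .base H' hb =>
    obtain ⟨hv, hh⟩ := H'.mem_Vx hρ
    exact ⟨evalBase_mem_Vx hv hb, hh⟩
  | .iteT H0 H1 | .iteF H0 H1 =>
    obtain ⟨-, hh0⟩ := H0.mem_Vx hρ
    obtain ⟨hv, hh1⟩ := H1.mem_Vx hρ
    exact ⟨hv, fun c hc => (List.mem_append.1 hc).elim (hh0 c) (hh1 c)⟩
  | .ambL H' | .ambR H' => exact H'.mem_Vx hρ
  | .call _ Hargs _ Hbody =>
    obtain ⟨hws, hhs⟩ := Hargs.mem_Vx hρ
    obtain ⟨hv, hh⟩ := Hbody.mem_Vx hws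
    refine ⟨hv, fun c hc => ?_⟩
    rcases List.mem_append.1 hc with hc | hc | ⟨_, hc⟩
    exacts [hhs c hc, hws, hh c hc]

theorem EvalArgsH.mem_Vx {x : List Bool} {ρ es ws m hs} (H : EvalArgsH p ρ es ws m hs)
    (hρ : ∀ u ∈ ρ, u ∈ Vx x) : (∀ u ∈ ws, u ∈ Vx x) ∧ ∀ c ∈ hs, ∀ u ∈ c.2, u ∈ Vx x := by
  match H with
  | .nil => simp
  | .cons He Hes =>
    obtain ⟨hv, hh⟩ := He.mem_Vx hρ
    obtain ⟨hvs, hhs⟩ := Hes.mem_Vx hρ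
    exact ⟨List.forall_mem_cons.2 ⟨hv, hvs⟩,
      fun c hc => (List.mem_append.1 hc).elim (hh c) (hhs c)⟩

end

mutual

theorem EvalH.exists_defn_of_mem_history {ρ e v n h} (H : EvalH p ρ e v n h) :
    ∀ c ∈ h, ∃ d, p[c.1]? = some d ∧ c.2.length = d.arity := by
  match H with
  | .tt | .ff | .nil | .var _ => simp
  | .base H' _ | .ambL H' | .ambR H' => exact H'.exists_defn_of_mem_history
  | .iteT H0 H1 | .iteF H0 H1 =>
    exact fun c hc => (List.mem_append.1 hc).elim (H0.exists_defn_of_mem_history c)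
      (H1.exists_defn_of_mem_history c)
  | .call hd Hargs hlen Hbody =>
    intro c hc
    rcases List.mem_append.1 hc with hc | hc | ⟨_, hc⟩
    exacts [Hargs.exists_defn_of_mem_history c hc, ⟨_, hd, hlen⟩,
      Hbody.exists_defn_of_mem_history c hc]

theorem EvalArgsH.exists_defn_of_mem_history {ρ es ws m hs} (H : EvalArgsH p ρ es ws m hs) :
    ∀ c ∈ hs, ∃ d, p[c.1]? = some d ∧ c.2.length = d.arity := by
  match H with
  | .nil => simp
  | .cons He Hes =>
    exact fun c hc => (List.mem_append.1 hc).elim (He.exists_defn_of_mem_history c)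
      (Hes.exists_defn_of_mem_history c)

end

mutual

theorem EvalH.size_le {S : ℕ} (hS : ∀ d ∈ p, sizeOf d.body < S) {ρ e v n h}
    (H : EvalH p ρ e v n h) : n ≤ sizeOf e + S * h.length := by
  match H with
  | .tt | .ff | .nil | .var _ => simp
  | .base H' _ =>
    have := H'.size_le hS
    simp only [Exp.base.sizeOf_spec]
    omega
  | .iteT H0 H1 | .iteF H0 H1 =>
    have := H0.size_le hS
    have := H1.size_le hS
    simp only [Exp.ite.sizeOf_spec, List.length_append, Nat.mul_add]
    omega
  | .ambL H' | .ambR H' =>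
    have := H'.size_le hS
    simp only [Exp.amb.sizeOf_spec]
    omega
  | .call hd Hargs _ Hbody =>
    have := Hargs.size_le hS
    have := Hbody.size_le hS
    have := hS _ (List.mem_of_getElem? hd)
    simp only [Exp.call.sizeOf_spec, List.length_append, List.length_cons, Nat.mul_add]
    omega

theorem EvalArgsH.size_le {S : ℕ} (hS : ∀ d ∈ p, sizeOf d.body < S) {ρ es ws m hs}
    (H : EvalArgsH p ρ es ws m hs) : m ≤ sizeOf es + S * hs.length := by
  match H with
  | .nil => simp
  | .cons He Hes =>
    have := He.size_le hS
    have := Hes.size_le hS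
    simp only [List.cons.sizeOf_spec, List.length_append, Nat.mul_add]
    omega

end

theorem EvalH.evalH_body_of_history_eq (htr : TRProg p) {ρ e v n h} (he : alpha e ≤ 1)
    (H : EvalH p ρ e v n h) {h₁ f ws h₂} (hsplit : h = h₁ ++ (f, ws) :: h₂) :
    ∃ d n', p[f]? = some d ∧ EvalH p ws d.body v n' h₂ := by
  match H with
  | .tt | .ff | .nil | .var _ => simp at hsplit
  | .base H' _ =>
    simp only [alpha] at he
    split_ifs at he with hc
    · omega
    · simp [H'.history_eq_nil (by simpa using hc)] at hsplit
  | .iteT H0 H1 | .iteF H0 H1 =>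
    simp only [alpha] at he
    split_ifs at he with hc
    · omega
    rw [H0.history_eq_nil (by simpa using hc), List.nil_append] at hsplit
    exact H1.evalH_body_of_history_eq htr (by omega) hsplit
  | .ambL H' | .ambR H' =>
    simp only [alpha] at he
    exact H'.evalH_body_of_history_eq htr (by omega) hsplit
  | .call hd Hargs _ Hbody =>
    simp only [alpha] at he
    split_ifs at he with hc
    swap; · omega
    rw [Hargs.history_eq_nil (by simpa using hc), List.nil_append] at hsplit
    match h₁, hsplit with
    | [], hsplit =>
      obtain ⟨⟨rfl, rfl⟩, rfl⟩ := by simpa using hsplit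
      exact ⟨_, _, hd, Hbody⟩
    | _ :: _, hsplit =>
      exact Hbody.evalH_body_of_history_eq htr (htr _ (List.mem_of_getElem? hd))
        (List.cons.inj hsplit).2

theorem EvalH.history_nodup (hp : CFTRProg p) {ρ e v n h} (hnc : NoChoice e)
    (he : alpha e ≤ 1) (H : EvalH p ρ e v n h) : h.Nodup := by
  induction h generalizing ρ e n with
  | nil => exact List.nodup_nil
  | cons c t ih =>
    obtain ⟨d, n', hd, Hc⟩ := H.evalH_body_of_history_eq hp.2 he (h₁ := []) rfl
    have hdp := List.mem_of_getElem? hd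
    refine List.nodup_cons.2 ⟨fun hct => ?_, ih (hp.1 d hdp) (hp.2 d hdp) Hc⟩
    -- a repeated call would make the history of `c` a proper suffix of itself
    obtain ⟨t₁, t₂, rfl⟩ := List.append_of_mem hct
    obtain ⟨d', n'', hd', Hc'⟩ := Hc.evalH_body_of_history_eq hp.2 (hp.2 d hdp) rfl
    obtain rfl := Option.some.inj (hd.symm.trans hd')
    have := congrArg List.length (Hc.deterministic hp.1 (hp.1 d hdp) Hc').2
    simp only [List.length_append, List.length_cons] at this
    omega

theorem CFProg.noChoice_entry (hp : CFProg p) : NoChoice p.entry := by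
  cases p with
  | nil => exact .tt
  | cons d _ => exact hp d List.mem_cons_self

theorem TRProg.alpha_entry_le (hp : TRProg p) : alpha p.entry ≤ 1 := by
  cases p with
  | nil => decide
  | cons d _ => exact hp d List.mem_cons_self

theorem RunH.history_nodup (hp : CFTRProg p) {x v n h} (H : RunH p x v n h) : h.Nodup :=
  EvalH.history_nodup hp hp.1.noChoice_entry hp.2.alpha_entry_le H

theorem exists_finset_superset_Vx (x : List Bool) :
    ∃ V : Finset Val, Vx x ⊆ V ∧ V.card ≤ x.length + 3 := by
  refine ⟨{.bool true, .bool false} ∪ x.tails.toFinset.image Val.str, ?_, ?_⟩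
  · rintro _ (⟨b, rfl⟩ | ⟨s, rfl, hs⟩)
    · cases b <;> simp
    · simp [hs]
  · calc _ ≤ 2 + (x.tails.toFinset.image Val.str).card := by
          grw [Finset.card_union_le, Finset.card_insert_le, Finset.card_singleton]
      _ ≤ 2 + x.tails.length := by
          grw [Finset.card_image_le, List.toFinset_card_le]
      _ = x.length + 3 := by rw [List.length_tails]; omega

theorem List.Nodup.length_le_of_forall_mem {α : Type*} [DecidableEq α] {V : Finset α}
    {P A : ℕ} {l : List (ℕ × List α)} (hl : l.Nodup)
    (hmem : ∀ c ∈ l, c.1 < P ∧ c.2.length ≤ A ∧ ∀ u ∈ c.2, u ∈ V) :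
    l.length ≤ P * (V.card + 1) ^ A := by
  -- padding argument lists to length `A` with `none` makes the encoding injective
  let enc : ℕ × List α → ℕ × (Fin A → Option α) := fun c => (c.1, fun i => c.2[(i : ℕ)]?)
  have henc : ∀ c ∈ l, ∀ c' ∈ l, enc c = enc c' → c = c' := by
    intro c hc c' hc' heq
    simp only [enc, Prod.mk.injEq, funext_iff] at heq
    refine Prod.ext heq.1 (List.ext_getElem? fun i => ?_)
    by_cases hi : i < A
    · exact heq.2 ⟨i, hi⟩
    · rw [List.getElem?_eq_none (by grind), List.getElem?_eq_none (by grind)]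
  have hsub : (l.map enc).toFinset ⊆
      Finset.range P ×ˢ Fintype.piFinset fun _ => V.insertNone := by
    intro y hy
    obtain ⟨c, hc, rfl⟩ := List.mem_map.1 (List.mem_toFinset.1 hy)
    obtain ⟨hc1, -, hc3⟩ := hmem c hc
    simp only [Finset.mem_product, Finset.mem_range, Fintype.mem_piFinset]
    refine ⟨hc1, fun i => ?_⟩
    cases hci : c.2[(i : ℕ)]? with
    | none => simp [enc, hci]
    | some u => simpa [enc, hci] using hc3 u (List.mem_of_getElem? hci)
  calc l.length = (l.map enc).toFinset.card := by
        rw [List.toFinset_card_of_nodup (hl.map_on henc), List.length_map]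
    _ ≤ _ := Finset.card_le_card hsub
    _ = P * (V.card + 1) ^ A := by simp

theorem CFTRProg.time_le (hp : CFTRProg p) {x : List Bool} {n : ℕ} (hT : TimeIs p x n) :
    n ≤ sizeOf p.entry + ((p.map fun d => sizeOf d.body).sum + 1) *
      (p.length * (x.length + 4) ^ (p.map Defn.arity).sum) := by
  obtain ⟨v, h, hrun⟩ := hT
  have H : EvalH p [.str x] p.entry v n h := hrun
  obtain ⟨V, hV, hVcard⟩ := exists_finset_superset_Vx x
  have hargs := (H.mem_Vx (x := x) (by simp)).2
  have hlen : h.length ≤ p.length * (V.card + 1) ^ (p.map Defn.arity).sum := by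
    refine (hrun.history_nodup hp).length_le_of_forall_mem fun c hc => ?_
    obtain ⟨d, hd, harity⟩ := H.exists_defn_of_mem_history c hc
    refine ⟨(List.getElem?_eq_some_iff.1 hd).1, ?_, fun u hu => hV (hargs c hc u hu)⟩
    exact harity ▸ List.le_sum_of_mem (List.mem_map_of_mem (List.mem_of_getElem? hd))
  calc n ≤ _ := H.size_le fun d hd => Nat.lt_add_one_of_le
        (List.le_sum_of_mem (List.mem_map_of_mem (f := fun d : Defn => sizeOf d.body) hd))
    _ ≤ _ := by
      gcongr
      calc h.length ≤ _ := hlen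
        _ ≤ _ := Nat.mul_le_mul_left _ (Nat.pow_le_pow_left (by omega) _)

theorem CFTRProg.cfpolyProg (hp : CFTRProg p) (hterm : ∀ x, ∃ v, Run p x v) :
    CFpolyProg p := by
  refine ⟨hp.1, hterm, .C (sizeOf p.entry) + .C ((p.map fun d => sizeOf d.body).sum + 1) *
    (.C p.length * (.X + 4) ^ (p.map Defn.arity).sum), fun x n hT => ?_⟩
  simpa only [Polynomial.eval_add, Polynomial.eval_mul, Polynomial.eval_C, Polynomial.eval_pow,
    Polynomial.eval_X, Polynomial.eval_ofNat] using hp.time_le hT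

theorem Decides.terminates {X : Set (List Bool)} (hdec : Decides p X) (x : List Bool) :
    ∃ v, Run p x v := by
  rcases hdec x with ⟨-, hrun⟩ | ⟨-, hrun⟩ <;> exact ⟨_, hrun⟩

end

/-- every terminating CFTR program is a CFpoly program, and the chain
`decide[CFTR] ⊆ decide[CFpoly] ⊆ decide[CF]` holds. -/
theorem decide_inclusion_chain :
    (∀ p : Prog, CFTRProg p → (∀ x : List Bool, ∃ v, Run p x v) → CFpolyProg p) ∧
    decideCFTR ⊆ decideCFpoly ∧ decideCFpoly ⊆ decideCF := by
  refine ⟨fun p hp hterm => hp.cfpolyProg hterm, ?_, ?_⟩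
  · rintro X ⟨p, hp, hdec⟩
    exact ⟨p, hp.cfpolyProg hdec.terminates, hdec⟩
  · rintro X ⟨p, hp, hdec⟩
    exact ⟨p, hp.1, hdec⟩
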